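/- arXiv:1112.3673 — 3 statements merged into one kernel-verified Lean document; each statement's English description precedes it below -/
import Mathlib

section
/- For every x ∈ ℝ, |u'(x)| ≤ C · max_{y ∈ [x − K, x + K]} |u(y)|, where C := C₂ + 2·√C₂ and K := 1/√C₂. -/
/-!
Pick a unimodular `c` with `c u'(x) = |u'(x)|` and set `v = Re (c u)`, `w = Re (c u')`, so that
`v' = w` and `w' = Re (c (V - E) u)`. As long as `0 ≤ v ≤ M`, the potential term satisfies
`Re (c (V - E) u) ≥ -(V₋ + |E|) M`, and over a window of length `K` the integral of `V₋ + |E|`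
is at most `C₁ + C₂ K = C₁ + √C₂`. Hence, starting at `x` in the direction in which `v` is
nonnegative (reflecting if necessary), `w` stays above `|u'(x)| - (C₁ + √C₂) M`; if this were
positive, `v` would increase and stay nonnegative, and would gain more than `M` over the window,
contradicting `v ≤ M`. So `|u'(x)| ≤ (C₁ + √C₂) M + M / K ≤ C M`.
-/

open MeasureTheory Set

theorem MeasureTheory.LocallyIntegrable.intervalIntegrable {F : Type*} [NormedAddCommGroup F]
    {f : ℝ → F} (hf : LocallyIntegrable f volume) (a b : ℝ) : IntervalIntegrable f volume a b :=
  (hf.integrableOn_isCompact isCompact_uIcc).intervalIntegrable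

theorem continuous_of_sub_eq_integral {E : Type*} [NormedAddCommGroup E] [NormedSpace ℝ E]
    [CompleteSpace E] {g f : ℝ → E} (hf : ∀ a b, IntervalIntegrable f volume a b)
    (hg : ∀ a b, a ≤ b → g b - g a = ∫ t in a..b, f t) : Continuous g := by
  have hprim : g = fun b => g 0 + ∫ t in (0 : ℝ)..b, f t := by
    funext b
    rcases le_total 0 b with hb | hb
    · rw [← hg 0 b hb, add_sub_cancel]
    · rw [intervalIntegral.integral_symm, ← hg b 0 hb]
      abel
  rw [hprim]
  exact continuous_const.add (intervalIntegral.continuous_primitive hf 0)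

theorem intervalIntegral_le_of_forall_integral_unit_le {f : ℝ → ℝ} {C a b : ℝ}
    (hf0 : ∀ t, 0 ≤ f t) (hf : ∀ a b, IntervalIntegrable f volume a b)
    (hC : ∀ p, ∫ t in p..p + 1, f t ≤ C) (hab : a ≤ b) :
    ∫ t in a..b, f t ≤ (b - a + 1) * C := by
  have hC0 : 0 ≤ C := (intervalIntegral.integral_nonneg (by linarith) fun t _ => hf0 t).trans (hC 0)
  set n := ⌈b - a⌉₊
  have hbn : b ≤ a + n := by linarith [Nat.le_ceil (b - a)]
  have hn : (n : ℝ) ≤ b - a + 1 := (Nat.ceil_lt_add_one (by linarith)).le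
  have hunits : ∫ t in a..a + n, f t ≤ n * C := by
    have hsplit := intervalIntegral.sum_integral_adjacent_intervals (a := fun k : ℕ => a + k)
      (n := n) (μ := volume) (f := f) fun k _ => hf _ _
    simp only [Nat.cast_zero, add_zero] at hsplit
    rw [← hsplit]
    calc ∑ k ∈ Finset.range n, ∫ t in a + k..a + (k + 1 : ℕ), f t
        ≤ ∑ _k ∈ Finset.range n, C :=
          Finset.sum_le_sum fun k _ => by simpa [add_assoc] using hC (a + k)
      _ = n * C := by simp
  calc ∫ t in a..b, f t ≤ ∫ t in a..a + n, f t :=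
        intervalIntegral.integral_mono_interval le_rfl hab hbn (.of_forall hf0) (hf _ _)
    _ ≤ (b - a + 1) * C := hunits.trans (mul_le_mul_of_nonneg_right hn hC0)

theorem mul_le_of_le_deriv_while_nonneg {v w : ℝ → ℝ} {x K M m : ℝ}
    (hv : ∀ t, HasDerivAt v (w t) t) (hw : Continuous w) (hK : 0 ≤ K)
    (hvx : 0 ≤ v x) (hvM : ∀ t ∈ Icc x (x + K), v t ≤ M)
    (hwm : ∀ s ∈ Icc x (x + K), (∀ t ∈ Icc x s, 0 ≤ v t) → m ≤ w s) :
    K * m ≤ M := by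
  have hvc : Continuous v := continuous_iff_continuousAt.2 fun t => (hv t).continuousAt
  have hM : 0 ≤ M := hvx.trans (hvM x (left_mem_Icc.2 (by linarith)))
  rcases le_or_gt m 0 with hm | hm
  · nlinarith
  have hstay : ∀ s ∈ Icc x (x + K), (∀ t ∈ Ico x s, 0 ≤ w t) → m ≤ w s := by
    intro s hs hws
    have hmono : MonotoneOn v (Icc x s) :=
      monotoneOn_of_hasDerivWithinAt_nonneg (convex_Icc x s) hvc.continuousOn
        (fun t _ => (hv t).hasDerivWithinAt)
        (fun t ht => hws t (Ioo_subset_Ico_self (by rwa [interior_Icc] at ht)))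
    exact hwm s hs fun t ht => hvx.trans (hmono (left_mem_Icc.2 (ht.1.trans ht.2)) ht ht.1)
  -- `w` cannot vanish on the window: at its first zero `sInf Z`, `hstay` gives `m ≤ w (sInf Z)`.
  have hpos : ∀ s ∈ Icc x (x + K), 0 < w s := by
    by_contra! hzero
    set Z := Icc x (x + K) ∩ {t | w t ≤ 0}
    have hZ : IsCompact Z := isCompact_Icc.inter_right (isClosed_le hw continuous_const)
    obtain ⟨hT, hwT⟩ := hZ.sInf_mem hzero
    have hbefore : ∀ t ∈ Ico x (sInf Z), 0 ≤ w t := fun t ht => by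
      by_contra! hwt
      exact ht.2.not_ge (csInf_le hZ.bddBelow ⟨⟨ht.1, ht.2.le.trans hT.2⟩, hwt.le⟩)
    linarith [hstay _ hT hbefore, show w (sInf Z) ≤ 0 from hwT]
  have hwK : ∀ s ∈ Icc x (x + K), m ≤ w s := fun s hs =>
    hstay s hs fun t ht => (hpos t ⟨ht.1, ht.2.le.trans hs.2⟩).le
  have hgrow := (convex_Icc x (x + K)).mul_sub_le_image_sub_of_le_deriv hvc.continuousOn
    (fun t _ => (hv t).differentiableAt.differentiableWithinAt)
    (fun t ht => (hv t).deriv ▸ hwK t (interior_subset ht))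
    x (left_mem_Icc.2 (by linarith)) (x + K) (right_mem_Icc.2 (by linarith)) (by linarith)
  have := hvM (x + K) (right_mem_Icc.2 (by linarith))
  nlinarith

theorem mul_le_of_deriv_le_while_nonneg_left {v w : ℝ → ℝ} {x K M m : ℝ}
    (hv : ∀ t, HasDerivAt v (w t) t) (hw : Continuous w) (hK : 0 ≤ K)
    (hvx : 0 ≤ v x) (hvM : ∀ t ∈ Icc (x - K) x, v t ≤ M)
    (hwm : ∀ s ∈ Icc (x - K) x, (∀ t ∈ Icc s x, 0 ≤ v t) → w s ≤ -m) :
    K * m ≤ M := by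
  refine mul_le_of_le_deriv_while_nonneg (v := fun t => v (-t)) (w := fun t => -w (-t)) (x := -x)
    (fun t => by simpa [Function.comp_def] using (hv (-t)).scomp t (hasDerivAt_neg t))
    (hw.comp continuous_neg).neg hK
    (by simpa using hvx) (fun t ht => hvM (-t) ⟨by linarith [ht.2], by linarith [ht.1]⟩)
    fun s hs hnn => le_neg.2 <| hwm (-s) ⟨by linarith [hs.2], by linarith [hs.1]⟩ fun t ht => by
      simpa using hnn (-t) ⟨by linarith [ht.2], by linarith [ht.1]⟩

theorem Complex.exists_norm_eq_one_mul_eq_norm (z : ℂ) : ∃ c : ℂ, ‖c‖ = 1 ∧ c * z = ‖z‖ := by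
  refine ⟨exp (↑(-z.arg) * I), norm_exp_ofReal_mul_I _, ?_⟩
  conv_lhs => rw [← norm_mul_exp_arg_mul_I z, mul_left_comm, ← exp_add]
  simp

theorem neg_mul_le_re_mul_sub_mul {V M : ℝ} {E c z : ℂ} (hc : ‖c‖ = 1)
    (hz : 0 ≤ (c * z).re) (hzM : ‖z‖ ≤ M) :
    -((max (-V) 0 + ‖E‖) * M) ≤ (c * ((V - E) * z)).re := by
  have hcz : ‖c * z‖ = ‖z‖ := by rw [norm_mul, hc, one_mul]
  have hre : (c * ((V - E) * z)).re = V * (c * z).re - (E * (c * z)).re := by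
    rw [show c * ((V - E) * z) = V * (c * z) - E * (c * z) by ring, Complex.sub_re,
      Complex.re_ofReal_mul]
  have hczM : (c * z).re ≤ M := (Complex.re_le_norm _).trans (hcz ▸ hzM)
  have hE : (E * (c * z)).re ≤ ‖E‖ * M := (Complex.re_le_norm _).trans <| by
    rw [norm_mul, hcz]; exact mul_le_mul_of_nonneg_left hzM (norm_nonneg E)
  rw [hre]
  nlinarith [le_max_left (-V) 0, le_max_right (-V) 0]

section Schrodinger

variable {V : ℝ → ℝ} {E : ℂ} {u u' : ℝ → ℂ}

theorem intervalIntegrable_potential_mul (hV : LocallyIntegrable V volume) (hu : Continuous u)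
    (a b : ℝ) : IntervalIntegrable (fun t => ((V t : ℂ) - E) * u t) volume a b :=
  IntervalIntegrable.mul_continuousOn
    (.sub ⟨(hV.intervalIntegrable a b).1.ofReal, (hV.intervalIntegrable a b).2.ofReal⟩
      intervalIntegrable_const) hu.continuousOn

theorem re_mul_deriv_sub_le_of_schrodinger {c : ℂ} {C₁ a b K M : ℝ}
    (hV : LocallyIntegrable V volume) (hu : ∀ x, HasDerivAt u (u' x) x)
    (heq : ∀ a b, a ≤ b → u' b - u' a = ∫ t in a..b, ((V t : ℂ) - E) * u t)
    (hC₁ : ∀ p, ∫ t in p..p + 1, max (-V t) 0 ≤ C₁) (hc : ‖c‖ = 1) (hab : a ≤ b)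
    (hbaK : b - a ≤ K) (hv : ∀ t ∈ Icc a b, 0 ≤ (c * u t).re)
    (huM : ∀ t ∈ Icc a b, ‖u t‖ ≤ M) :
    (c * u' a).re - (C₁ + (C₁ + ‖E‖) * K) * M ≤ (c * u' b).re := by
  have hint := intervalIntegrable_potential_mul (E := E) hV
    (continuous_iff_continuousAt.2 fun t => (hu t).continuousAt) a b
  have hVneg : ∀ a b, IntervalIntegrable (fun t => max (-V t) 0) volume a b := fun a b =>
    ⟨(hV.intervalIntegrable a b).1.neg_part, (hV.intervalIntegrable a b).2.neg_part⟩
  have hdiff : (c * u' b).re - (c * u' a).re = ∫ t in a..b, (c * (((V t : ℂ) - E) * u t)).re := by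
    rw [← Complex.sub_re, ← mul_sub, heq a b hab, ← intervalIntegral.integral_const_mul]
    exact (intervalIntegral.intervalIntegral_re (hint.const_mul c)).symm
  have hlower := intervalIntegral.integral_mono_on (f := fun t => -((max (-V t) 0 + ‖E‖) * M))
    (g := fun t => (c * (((V t : ℂ) - E) * u t)).re) hab
    (((hVneg a b).add intervalIntegrable_const).mul_const M).neg
    ⟨(hint.const_mul c).1.re, (hint.const_mul c).2.re⟩
    fun t ht => neg_mul_le_re_mul_sub_mul (V := V t) hc (hv t ht) (huM t ht)
  rw [intervalIntegral.integral_neg, intervalIntegral.integral_mul_const,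
    intervalIntegral.integral_add (hVneg a b) intervalIntegrable_const,
    intervalIntegral.integral_const, smul_eq_mul] at hlower
  have hwin := intervalIntegral_le_of_forall_integral_unit_le (fun t => le_max_right _ _)
    hVneg hC₁ hab
  have hC₁0 : 0 ≤ C₁ := (intervalIntegral.integral_nonneg zero_le_one fun t _ =>
    le_max_right _ _).trans (by simpa using hC₁ 0)
  have hM : 0 ≤ M := (norm_nonneg _).trans (huM a (left_mem_Icc.2 hab))
  have hwindow : (∫ t in a..b, max (-V t) 0) + ‖E‖ * (b - a) ≤ C₁ + (C₁ + ‖E‖) * K := by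
    nlinarith [norm_nonneg E]
  nlinarith

theorem mul_sub_le_of_schrodinger {C₁ x K M : ℝ}
    (hV : LocallyIntegrable V volume) (hu : ∀ x, HasDerivAt u (u' x) x)
    (heq : ∀ a b, a ≤ b → u' b - u' a = ∫ t in a..b, ((V t : ℂ) - E) * u t)
    (hC₁ : ∀ p, ∫ t in p..p + 1, max (-V t) 0 ≤ C₁) (hK : 0 ≤ K)
    (huM : ∀ t ∈ Icc (x - K) (x + K), ‖u t‖ ≤ M) :
    K * (‖u' x‖ - (C₁ + (C₁ + ‖E‖) * K) * M) ≤ M := by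
  have hu' : Continuous u' := continuous_of_sub_eq_integral (intervalIntegrable_potential_mul hV
    (continuous_iff_continuousAt.2 fun t => (hu t).continuousAt)) heq
  have hderiv (c : ℂ) (t : ℝ) : HasDerivAt (fun t => (c * u t).re) (c * u' t).re t :=
    Complex.reCLM.hasFDerivAt.comp_hasDerivAt t ((hu t).const_mul c)
  have hvM {c : ℂ} (hc : ‖c‖ = 1) {t : ℝ} (ht : t ∈ Icc (x - K) (x + K)) : (c * u t).re ≤ M :=
    (Complex.re_le_norm _).trans (by rw [norm_mul, hc, one_mul]; exact huM t ht)
  have hdrop {c : ℂ} (hc : ‖c‖ = 1) {a b : ℝ} (ha : x - K ≤ a) (hab : a ≤ b) (hb : b ≤ x + K)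
      (hbaK : b - a ≤ K) (hv : ∀ t ∈ Icc a b, 0 ≤ (c * u t).re) :=
    re_mul_deriv_sub_le_of_schrodinger hV hu heq hC₁ hc hab hbaK hv
      fun t ht => huM t ⟨ha.trans ht.1, ht.2.trans hb⟩
  obtain ⟨c, hc, hcu⟩ := Complex.exists_norm_eq_one_mul_eq_norm (u' x)
  have hcu' : (c * u' x).re = ‖u' x‖ := by rw [hcu, Complex.ofReal_re]
  -- go right if `Re (c u)` starts nonnegative, otherwise go left with the phase `-c`
  rcases le_or_gt 0 (c * u x).re with hvx | hvx
  · refine mul_le_of_le_deriv_while_nonneg (hderiv c) (by fun_prop) hK hvx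
      (fun t ht => hvM hc ⟨by linarith [ht.1], ht.2⟩) fun s hs hv => ?_
    linarith [hdrop hc (by linarith) hs.1 hs.2 (by linarith [hs.2]) hv]
  · have hc' : ‖-c‖ = 1 := by rwa [norm_neg]
    refine mul_le_of_deriv_le_while_nonneg_left (hderiv (-c)) (by fun_prop) hK
      (by simpa [neg_mul] using hvx.le) (fun t ht => hvM hc' ⟨ht.1, by linarith [ht.2]⟩)
      fun s hs hv => ?_
    have := hdrop hc' hs.1 hs.2 (by linarith) (by linarith [hs.1]) hv
    simp only [neg_mul, Complex.neg_re] at this ⊢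
    linarith

end Schrodinger

theorem stmt_2_general
    (V : ℝ → ℝ)
    (hVloc : LocallyIntegrable V volume)
    (C₁ : ℝ)
    (hC₁ : IsLUB (Set.range fun x : ℝ => ∫ y in x..x + 1, max (-V y) 0) C₁)
    (E : ℂ) (u u' : ℝ → ℂ)
    (hu : ∀ x : ℝ, HasDerivAt u (u' x) x)
    (heq : ∀ a b : ℝ, a ≤ b →
      u' b - u' a = ∫ t in a..b, ((V t : ℂ) - E) * u t)
    (C₂ : ℝ) (hC₂ : C₂ = C₁ + ‖E‖) (hC₂pos : 0 < C₂)
    (C K : ℝ) (hC : C = C₂ + 2 * Real.sqrt C₂) (hK : K = 1 / Real.sqrt C₂)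
    (x : ℝ) (M : ℝ)
    (hM : IsGreatest ((fun t => ‖u t‖) '' Icc (x - K) (x + K)) M) :
    ‖u' x‖ ≤ C * M := by
  have hh : 0 < Real.sqrt C₂ := Real.sqrt_pos.2 hC₂pos
  have hhK : Real.sqrt C₂ * K = 1 := by rw [hK]; field_simp
  have hC₂K : C₂ * K = Real.sqrt C₂ := by
    linear_combination Real.sqrt C₂ * hhK - K * Real.mul_self_sqrt hC₂pos.le
  have hM0 : 0 ≤ M := by obtain ⟨t, -, rfl⟩ := hM.1; positivity
  have hkey := mul_sub_le_of_schrodinger hVloc hu heq (fun p => hC₁.1 ⟨p, rfl⟩)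
    (by rw [hK]; positivity) fun t ht => hM.2 ⟨t, ht, rfl⟩
  rw [← hC₂, hC₂K] at hkey
  have hbound : ‖u' x‖ - (C₁ + Real.sqrt C₂) * M ≤ Real.sqrt C₂ * M := by
    simpa [← mul_assoc, hhK] using mul_le_mul_of_nonneg_left hkey hh.le
  rw [hC]
  nlinarith [mul_nonneg (norm_nonneg E) hM0]

/-- Theorem 1.1(i): `|u'(x)| ≤ C · max_{y ∈ [x-K, x+K]} |u(y)|`
with `C = C₂ + 2√C₂` and `K = 1/√C₂`. -/
theorem stmt_2
    (V : ℝ → ℝ) (hVmeas : Measurable V)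
    (hVloc : LocallyIntegrable V volume)
    (C₁ : ℝ)
    (hC₁ : IsLUB (Set.range fun x : ℝ => ∫ y in x..x + 1, max (-V y) 0) C₁)
    (E : ℂ) (u u' : ℝ → ℂ)
    (hu : ∀ x : ℝ, HasDerivAt u (u' x) x)
    (heq : ∀ a b : ℝ, a ≤ b →
      u' b - u' a = ∫ t in a..b, ((V t : ℂ) - E) * u t)
    (C₂ : ℝ) (hC₂ : C₂ = C₁ + ‖E‖) (hC₂pos : 0 < C₂)
    (C K : ℝ) (hC : C = C₂ + 2 * Real.sqrt C₂) (hK : K = 1 / Real.sqrt C₂)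
    (x : ℝ) (M : ℝ)
    (hM : IsGreatest ((fun t => ‖u t‖) '' Icc (x - K) (x + K)) M) :
    ‖u' x‖ ≤ C * M :=
  stmt_2_general V hVloc C₁ hC₁ E u u' hu heq C₂ hC₂ hC₂pos C K hC hK x M hM
end

section
/- Let x ∈ ℝ be such that u(x) ≠ 0 and Re(conj(u(x))·u'(x)) ≥ 0. Then |u(y)| > |u(x)|/2 for all y ∈ [x, x + δ), where δ := −1/2 + √(1/4 + 1/(2·C₂)). -/
open MeasureTheory Set intervalIntegral ComplexConjugate

/-! Let `t'` maximise `‖u‖` on `[x, y]`, put `M := ‖u t'‖` and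
`G t := Re (conj (u t') * u t)`. Then `G t' = M²`, `G' t' ≥ 0` (by the sign hypothesis if
`t' = x`, by maximality otherwise) and `G ≤ M ‖u‖`. While `G ≥ 0`, the equation gives
`G'' = V G - Re (E conj (u t') u) ≥ -M² (V₋ + ‖E‖)`, and integrating twice with
`∫ V₋ ≤ C₁ (L + 1)` over intervals of length `L` yields
`G ≥ M² (1 - C₁ L - C₂ L² / 2)` at distance `L` from `t'`. The choice of `δ` keeps this above
`M² / 2` up to `y`, so `M ‖u y‖ ≥ G y > M² / 2 ≥ M ‖u x‖ / 2`. -/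

theorem MeasureTheory.LocallyIntegrable.intervalIntegrable_max_neg_zero {V : ℝ → ℝ}
    (hV : LocallyIntegrable V volume) (a b : ℝ) :
    IntervalIntegrable (fun y => max (-V y) 0) volume a b :=
  IntegrableOn.intervalIntegrable (hV.integrableOn_isCompact isCompact_uIcc).neg.pos_part

theorem MeasureTheory.LocallyIntegrable.intervalIntegrable_ofReal_sub_mul {V : ℝ → ℝ}
    (hV : LocallyIntegrable V volume) (E : ℂ) {u : ℝ → ℂ} (hu : Continuous u) (a b : ℝ) :
    IntervalIntegrable (fun t => ((V t : ℂ) - E) * u t) volume a b := by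
  have hVE : IntegrableOn (fun t => (V t : ℂ) - E) (uIcc a b) volume :=
    (hV.integrableOn_isCompact isCompact_uIcc).ofReal.sub
      (integrableOn_const isCompact_uIcc.measure_lt_top.ne)
  exact (hVE.mul_continuousOn hu.continuousOn isCompact_uIcc).intervalIntegrable

theorem integral_le_mul_add_one_of_forall_integral_unit_le {f : ℝ → ℝ} {C : ℝ}
    (hf : ∀ y, 0 ≤ f y) (hfi : ∀ a b, IntervalIntegrable f volume a b)
    (hC : ∀ p, ∫ y in p..p + 1, f y ≤ C) (a : ℝ) {m : ℝ} (hm : 0 ≤ m) :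
    ∫ y in a..a + m, f y ≤ C * (m + 1) := by
  have hC0 : 0 ≤ C := (integral_nonneg zero_le_one fun y _ => hf y).trans (by simpa using hC 0)
  have hnat : ∀ n : ℕ, ∫ y in a..a + n, f y ≤ n * C := by
    intro n
    induction n with
    | zero => simp
    | succ n ih =>
      rw [Nat.cast_succ, ← add_assoc, ← integral_add_adjacent_intervals (hfi _ _) (hfi _ _)]
      linarith [hC (a + n)]
  calc ∫ y in a..a + m, f y ≤ ∫ y in a..a + ⌈m⌉₊, f y :=
        integral_mono_interval le_rfl (by linarith) (by linarith [Nat.le_ceil m])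
          (ae_of_all _ hf) (hfi _ _)
    _ ≤ ⌈m⌉₊ * C := hnat _
    _ ≤ C * (m + 1) := by nlinarith [Nat.ceil_lt_add_one hm]

theorem re_conj_mul_eq_zero_of_isLocalMax_norm {u : ℝ → ℂ} {u' : ℂ} {t : ℝ}
    (hu : HasDerivAt u u' t) (hmax : IsLocalMax (fun s => ‖u s‖) t) :
    (conj (u t) * u').re = 0 := by
  have hsq : IsLocalMax (fun s => ‖u s‖ ^ 2) t :=
    hmax.mono fun s hs => pow_le_pow_left₀ (norm_nonneg _) hs 2
  have h := hsq.hasDerivAt_eq_zero hu.norm_sq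
  rw [Complex.inner, mul_comm] at h
  rw [mul_comm]
  linarith

theorem sub_le_of_hasDerivAt_of_neg_affine_le {G g : ℝ → ℝ} {a b A B : ℝ} (hab : a ≤ b)
    (hG : ∀ t ∈ Icc a b, HasDerivAt G (g t) t)
    (hg : ∀ t ∈ Icc a b, -(A + B * (t - a)) ≤ g t) :
    G a - (A * (b - a) + B * (b - a) ^ 2 / 2) ≤ G b := by
  set φ := fun t => G t + (A * (t - a) + B * (t - a) ^ 2 / 2)
  have hφ : ∀ t ∈ Icc a b, HasDerivAt φ (g t + (A + B * (t - a))) t := by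
    intro t ht
    have hlin := (hasDerivAt_id' t).sub_const a
    have hpoly : HasDerivAt (fun t => A * (t - a) + B * (t - a) ^ 2 / 2) (A + B * (t - a)) t :=
      ((hlin.const_mul A).add ((hlin.pow 2).const_mul B |>.div_const 2)).congr_deriv (by ring)
    exact (hG t ht).add hpoly
  have hmono : MonotoneOn φ (Icc a b) :=
    monotoneOn_of_hasDerivWithinAt_nonneg (convex_Icc a b)
      (fun t ht => (hφ t ht).continuousAt.continuousWithinAt)
      (fun t ht => (hφ t (interior_subset ht)).hasDerivWithinAt)
      (fun t ht => by linarith [hg t (interior_subset ht)])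
  have := hmono (left_mem_Icc.2 hab) (right_mem_Icc.2 hab) hab
  simp only [φ, sub_self] at this
  linarith

theorem forall_lt_of_continuousOn_Icc {f : ℝ → ℝ} {a b c : ℝ}
    (hf : ContinuousOn f (Icc a b)) (ha : c < f a)
    (hstep : ∀ τ ∈ Icc a b, (∀ s ∈ Icc a τ, c ≤ f s) → c < f τ) :
    ∀ t ∈ Icc a b, c < f t := by
  by_contra! ⟨t₀, ht₀, hft₀⟩
  set K := Icc a b ∩ f ⁻¹' Iic c
  have hK : IsCompact K :=
    isCompact_Icc.of_isClosed_subset (hf.preimage_isClosed_of_isClosed isClosed_Icc isClosed_Iic)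
      inter_subset_left
  obtain ⟨τ, ⟨hτ, hfτ⟩, hτleast⟩ := hK.exists_isLeast ⟨t₀, ht₀, hft₀⟩
  -- `τ` is the first point with `f τ ≤ c`; the intermediate value theorem forces `f τ = c`.
  obtain ⟨s, hs, hfs⟩ : c ∈ f '' Icc a τ :=
    intermediate_value_Icc' hτ.1 (hf.mono (Icc_subset_Icc le_rfl hτ.2)) ⟨hfτ, ha.le⟩
  have hsτ : s = τ := le_antisymm hs.2 (hτleast ⟨⟨hs.1, hs.2.trans hτ.2⟩, hfs.le⟩)
  refine (hstep τ hτ fun r hr => ?_).not_ge hfτ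
  by_contra! hfr
  have hτr : τ ≤ r := hτleast ⟨⟨hr.1, hr.2.trans hτ.2⟩, hfr.le⟩
  rw [le_antisymm hr.2 hτr, ← hsτ, hfs] at hfr
  exact lt_irrefl c hfr

theorem mul_add_mul_sq_div_two_lt_half {C₁ C₂ L : ℝ} (hC : C₁ ≤ C₂) (hC₂ : 0 < C₂)
    (hL : 0 ≤ L) (hLδ : L < -(1 / 2) + √(1 / 4 + 1 / (2 * C₂))) :
    C₁ * L + C₂ * L ^ 2 / 2 < 1 / 2 := by
  set δ := -(1 / 2) + √(1 / 4 + 1 / (2 * C₂))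
  have hδ : C₂ * (δ ^ 2 + δ) = 1 / 2 := by
    have hsq := Real.sq_sqrt (show 0 ≤ 1 / 4 + 1 / (2 * C₂) by positivity)
    have : δ ^ 2 + δ = 1 / (2 * C₂) := by simp only [δ]; linear_combination hsq
    rw [this]; field_simp
  nlinarith [mul_le_mul_of_nonneg_right hC hL, mul_lt_mul_of_pos_left hLδ hC₂,
    mul_lt_mul_of_pos_left (pow_lt_pow_left₀ hLδ hL two_ne_zero) hC₂]

section Schrodinger

variable {V : ℝ → ℝ} {E : ℂ} {u u' : ℝ → ℂ}

theorem sub_le_re_mul_deriv_of_schrodinger (hV : LocallyIntegrable V volume) (hu : Continuous u)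
    (heq : ∀ a b : ℝ, a ≤ b → u' b - u' a = ∫ t in a..b, ((V t : ℂ) - E) * u t)
    {w : ℂ} {M a b : ℝ} (hab : a ≤ b) (hM : ∀ s ∈ Icc a b, ‖u s‖ ≤ M)
    (hpos : ∀ s ∈ Icc a b, 0 ≤ (w * u s).re) :
    (w * u' a).re - ‖w‖ * M * ((∫ s in a..b, max (-V s) 0) + ‖E‖ * (b - a)) ≤
      (w * u' b).re := by
  have hI := (hV.intervalIntegrable_ofReal_sub_mul E hu a b).const_mul w
  have hdiff : (w * u' b).re - (w * u' a).re =
      ∫ s in a..b, (w * (((V s : ℂ) - E) * u s)).re := by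
    rw [← Complex.sub_re, ← mul_sub, heq a b hab, ← intervalIntegral.integral_const_mul]
    exact (intervalIntegral_re hI).symm
  have hpt : ∀ s ∈ Icc a b, -(‖w‖ * M) * max (-V s) 0 - ‖w‖ * M * ‖E‖ ≤
      (w * (((V s : ℂ) - E) * u s)).re := by
    intro s hs
    have hwu : ‖w * u s‖ ≤ ‖w‖ * M := by
      rw [norm_mul]; exact mul_le_mul_of_nonneg_left (hM s hs) (norm_nonneg w)
    have hG : (w * u s).re ≤ ‖w‖ * M := (Complex.re_le_norm _).trans hwu
    have hE : (E * (w * u s)).re ≤ ‖w‖ * M * ‖E‖ := by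
      refine (Complex.re_le_norm _).trans ?_
      rw [norm_mul, mul_comm]
      exact mul_le_mul_of_nonneg_right hwu (norm_nonneg E)
    have hsplit : (w * (((V s : ℂ) - E) * u s)).re = V s * (w * u s).re - (E * (w * u s)).re := by
      rw [show w * (((V s : ℂ) - E) * u s) = (V s : ℂ) * (w * u s) - E * (w * u s) by ring,
        Complex.sub_re, Complex.re_ofReal_mul]
    rw [hsplit]
    nlinarith [le_max_left (-V s) 0, le_max_right (-V s) 0, hpos s hs]
  have hmono := integral_mono_on hab
    (((hV.intervalIntegrable_max_neg_zero a b).const_mul _).sub intervalIntegrable_const)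
    ⟨hI.1.re, hI.2.re⟩ hpt
  rw [integral_sub ((hV.intervalIntegrable_max_neg_zero a b).const_mul _) intervalIntegrable_const,
    intervalIntegral.integral_const_mul, intervalIntegral.integral_const, smul_eq_mul] at hmono
  simp only [RCLike.re_to_complex] at hmono
  linarith

theorem sub_le_re_mul_of_schrodinger (hV : LocallyIntegrable V volume)
    (hu : ∀ t, HasDerivAt u (u' t) t)
    (heq : ∀ a b : ℝ, a ≤ b → u' b - u' a = ∫ t in a..b, ((V t : ℂ) - E) * u t)
    {C : ℝ} (hC : ∀ p, ∫ y in p..p + 1, max (-V y) 0 ≤ C)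
    {w : ℂ} {M a b : ℝ} (hab : a ≤ b) (hM : ∀ s ∈ Icc a b, ‖u s‖ ≤ M)
    (hpos : ∀ s ∈ Icc a b, 0 ≤ (w * u s).re) (hderiv : 0 ≤ (w * u' a).re) :
    (w * u a).re - ‖w‖ * M * (C * (b - a) + (C + ‖E‖) * (b - a) ^ 2 / 2) ≤
      (w * u b).re := by
  have hu_cont : Continuous u := continuous_iff_continuousAt.2 fun t => (hu t).continuousAt
  have hwM : 0 ≤ ‖w‖ * M :=
    mul_nonneg (norm_nonneg w) ((norm_nonneg _).trans (hM a (left_mem_Icc.2 hab)))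
  have hlower : ∀ t ∈ Icc a b,
      -(‖w‖ * M * C + ‖w‖ * M * (C + ‖E‖) * (t - a)) ≤ (w * u' t).re := by
    intro t ht
    have hsub : Icc a t ⊆ Icc a b := Icc_subset_Icc le_rfl ht.2
    have hderiv_t := sub_le_re_mul_deriv_of_schrodinger hV hu_cont heq ht.1
      (fun s hs => hM s (hsub hs)) (fun s hs => hpos s (hsub hs))
    have hint := integral_le_mul_add_one_of_forall_integral_unit_le (fun y => le_max_right _ _)
      hV.intervalIntegrable_max_neg_zero hC a (sub_nonneg.2 ht.1)
    rw [add_sub_cancel] at hint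
    nlinarith [mul_le_mul_of_nonneg_left hint hwM]
  have hG := sub_le_of_hasDerivAt_of_neg_affine_le (G := fun t => (w * u t).re) hab
    (fun t _ => Complex.reCLM.hasFDerivAt.comp_hasDerivAt t ((hu t).const_mul w)) hlower
  linarith

end Schrodinger

theorem stmt_3_general
    (V : ℝ → ℝ)
    (hVloc : LocallyIntegrable V volume)
    (C₁ : ℝ)
    (hC₁ : IsLUB (Set.range fun x : ℝ => ∫ y in x..x + 1, max (-V y) 0) C₁)
    (E : ℂ) (u u' : ℝ → ℂ)
    (hu : ∀ x : ℝ, HasDerivAt u (u' x) x)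
    (heq : ∀ a b : ℝ, a ≤ b →
      u' b - u' a = ∫ t in a..b, ((V t : ℂ) - E) * u t)
    (C₂ : ℝ) (hC₂ : C₂ = C₁ + ‖E‖) (hC₂pos : 0 < C₂)
    (δ : ℝ) (hδ : δ = -(1 / 2) + Real.sqrt (1 / 4 + 1 / (2 * C₂)))
    (x : ℝ) (hx : u x ≠ 0) (hsign : 0 ≤ (starRingEnd ℂ (u x) * u' x).re) :
    ∀ y ∈ Ico x (x + δ), ‖u x‖ / 2 < ‖u y‖ := by
  rintro y ⟨hxy, hyδ⟩
  have hu_cont : Continuous u := continuous_iff_continuousAt.2 fun t => (hu t).continuousAt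
  obtain ⟨t', ht', hmax⟩ := isCompact_Icc.exists_isMaxOn (nonempty_Icc.2 hxy)
    (continuous_norm.comp hu_cont).continuousOn
  set M := ‖u t'‖
  have hxM : ‖u x‖ ≤ M := hmax (left_mem_Icc.2 hxy)
  have hM : 0 < M := (norm_pos_iff.2 hx).trans_le hxM
  rcases ht'.2.eq_or_lt with rfl | ht'y
  · linarith
  set w := conj (u t')
  have hwM : ‖w‖ = M := Complex.norm_conj _
  have hG_t' : (w * u t').re = M ^ 2 := by
    rw [mul_comm, Complex.mul_conj, Complex.ofReal_re, Complex.normSq_eq_norm_sq]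
  have hderiv : 0 ≤ (w * u' t').re := by
    rcases ht'.1.eq_or_lt with rfl | hxt'
    · exact hsign
    · exact (re_conj_mul_eq_zero_of_isLocalMax_norm (hu t')
        (hmax.isLocalMax (Icc_mem_nhds hxt' ht'y))).ge
  have hG_gt : ∀ t ∈ Icc t' y, M ^ 2 / 2 < (w * u t).re := by
    refine forall_lt_of_continuousOn_Icc
      (Complex.continuous_re.comp (continuous_const.mul hu_cont)).continuousOn
      (by rw [hG_t']; nlinarith) fun τ hτ hge => ?_
    have hlow := sub_le_re_mul_of_schrodinger (M := M) hVloc hu heq (fun p => hC₁.1 ⟨p, rfl⟩)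
      hτ.1 (fun s hs => hmax (Icc_subset_Icc ht'.1 hτ.2 hs))
      (fun s hs => (by positivity : (0 : ℝ) ≤ M ^ 2 / 2).trans (hge s hs)) hderiv
    have hsmall := mul_add_mul_sq_div_two_lt_half (C₁ := C₁) (C₂ := C₂) (L := τ - t')
      (by rw [hC₂]; linarith [norm_nonneg E]) hC₂pos (sub_nonneg.2 hτ.1)
      (by rw [← hδ]; linarith [ht'.1, hτ.2])
    rw [hG_t', hwM, ← hC₂] at hlow
    nlinarith [mul_lt_mul_of_pos_left hsmall (mul_pos hM hM)]
  have hGy : (w * u y).re ≤ M * ‖u y‖ := by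
    refine (Complex.re_le_norm _).trans ?_
    rw [norm_mul, hwM]
  nlinarith [hG_gt y (right_mem_Icc.2 ht'y.le)]

/-- Theorem 1.1(ii): if `u(x) ≠ 0` and `Re(conj(u(x)) u'(x)) ≥ 0`, then
`|u(y)| > |u(x)|/2` for `y ∈ [x, x + δ)`, where `δ = -1/2 + √(1/4 + 1/(2C₂))`. -/
theorem stmt_3
    (V : ℝ → ℝ) (hVmeas : Measurable V)
    (hVloc : LocallyIntegrable V volume)
    (C₁ : ℝ)
    (hC₁ : IsLUB (Set.range fun x : ℝ => ∫ y in x..x + 1, max (-V y) 0) C₁)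
    (E : ℂ) (u u' : ℝ → ℂ)
    (hu : ∀ x : ℝ, HasDerivAt u (u' x) x)
    (heq : ∀ a b : ℝ, a ≤ b →
      u' b - u' a = ∫ t in a..b, ((V t : ℂ) - E) * u t)
    (C₂ : ℝ) (hC₂ : C₂ = C₁ + ‖E‖) (hC₂pos : 0 < C₂)
    (δ : ℝ) (hδ : δ = -(1 / 2) + Real.sqrt (1 / 4 + 1 / (2 * C₂)))
    (x : ℝ) (hx : u x ≠ 0) (hsign : 0 ≤ (starRingEnd ℂ (u x) * u' x).re) :
    ∀ y ∈ Ico x (x + δ), ‖u x‖ / 2 < ‖u y‖ :=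
  stmt_3_general V hVloc C₁ hC₁ E u u' hu heq C₂ hC₂ hC₂pos δ hδ x hx hsign
end

section
/- If u is bounded on ℝ, then u' is bounded on ℝ; more precisely, sup_{x ∈ ℝ} |u'(x)| ≤ (C₂ + 2·√C₂) · sup_{x ∈ ℝ} |u(x)|. -/
/-!
Fix `x₀`, let `M = sup |u|`, and pick a unit `c` with `c u'(x₀) = |u'(x₀)| =: q`; after reflecting
`u` at `x₀` if necessary, `Re (c u(x₀)) ≥ 0`. For `w(t) = Re (c u(x₀ + t))` the equation gives
`w'' = Re (c (V - E) u) ≥ -M (V₋ + |E|)` as long as `w ≥ 0`, hence `w'(t) ≥ q - M (C₁ + C₂ t)`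
there, so `w` keeps increasing while this bound is positive. If `q > (C₁ + 2√C₂) M`, the bound
stays positive on `[0, 2/√C₂]`, and integrating it shows that `w` grows by more than `2M` there,
which is impossible since `|w| ≤ M`.
-/

open MeasureTheory Set

lemma integral_le_nat_mul_of_integral_unit_le {f : ℝ → ℝ} {C : ℝ}
    (hf : ∀ a b, IntervalIntegrable f volume a b) (hC : ∀ x, ∫ y in x..x + 1, f y ≤ C)
    (a : ℝ) (n : ℕ) : ∫ y in a..a + n, f y ≤ n * C := by
  induction n with
  | zero => simp
  | succ k ih =>
    have hsplit : a + ↑(k + 1) = (a + k) + 1 := by push_cast; ring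
    rw [hsplit, ← intervalIntegral.integral_add_adjacent_intervals (hf a (a + k)) (hf _ _)]
    push_cast
    linarith [hC (a + k)]

lemma integral_le_mul_add_one_of_integral_unit_le {f : ℝ → ℝ} {C : ℝ}
    (hf : ∀ a b, IntervalIntegrable f volume a b) (hf₀ : ∀ x, 0 ≤ f x)
    (hC : ∀ x, ∫ y in x..x + 1, f y ≤ C) (a : ℝ) {t : ℝ} (ht : 0 ≤ t) :
    ∫ y in a..a + t, f y ≤ C * (t + 1) := by
  have hC₀ : 0 ≤ C :=
    (intervalIntegral.integral_nonneg (by linarith) fun y _ => hf₀ y).trans (hC 0)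
  calc ∫ y in a..a + t, f y ≤ ∫ y in a..a + ⌈t⌉₊, f y :=
        intervalIntegral.integral_mono_interval le_rfl (by linarith) (by linarith [Nat.le_ceil t])
          (ae_of_all _ hf₀) (hf _ _)
    _ ≤ ⌈t⌉₊ * C := integral_le_nat_mul_of_integral_unit_le hf hC a _
    _ ≤ C * (t + 1) := by nlinarith [Nat.ceil_lt_add_one ht]

lemma integral_const_sub_mul_id (A B δ : ℝ) :
    ∫ t in 0..δ, (A - B * t) = A * δ - B * δ ^ 2 / 2 := by
  rw [intervalIntegral.integral_sub intervalIntegrable_const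
    ((continuous_const_mul B).intervalIntegrable _ _), intervalIntegral.integral_const,
    intervalIntegral.integral_const_mul, integral_id, smul_eq_mul]
  ring

lemma IntervalIntegrable.max_neg_zero {f : ℝ → ℝ} {μ : Measure ℝ} {a b : ℝ}
    (hf : IntervalIntegrable f μ a b) : IntervalIntegrable (fun y => max (-f y) 0) μ a b :=
  ⟨hf.1.neg.sup (integrable_zero _ _ _), hf.2.neg.sup (integrable_zero _ _ _)⟩

lemma nonneg_on_Icc_of_hasDerivAt_nonneg {w g : ℝ → ℝ} {b : ℝ}
    (hw : ∀ t, HasDerivAt w (g t) t) (hw₀ : 0 ≤ w 0) (hg : ∀ t ∈ Ioo 0 b, 0 ≤ g t) :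
    ∀ r ∈ Icc 0 b, 0 ≤ w r := by
  have hmono : MonotoneOn w (Icc 0 b) :=
    monotoneOn_of_hasDerivWithinAt_nonneg (convex_Icc 0 b)
      (fun t _ => (hw t).continuousAt.continuousWithinAt) (fun t _ => (hw t).hasDerivWithinAt)
      (by rwa [interior_Icc])
  exact fun r hr => hw₀.trans (hmono ⟨le_rfl, hr.1.trans hr.2⟩ hr hr.1)

lemma le_deriv_of_le_deriv_while_nonneg {w g ℓ : ℝ → ℝ} {δ : ℝ}
    (hw : ∀ t, HasDerivAt w (g t) t) (hg : ContinuousOn g (Icc 0 δ)) (hw₀ : 0 ≤ w 0)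
    (hℓ : ∀ t ∈ Icc 0 δ, 0 < ℓ t)
    (hwg : ∀ t ∈ Icc 0 δ, (∀ r ∈ Icc 0 t, 0 ≤ w r) → ℓ t ≤ g t) :
    ∀ t ∈ Icc 0 δ, ℓ t ≤ g t := by
  have hpos : ∀ t ∈ Icc 0 δ, 0 < g t := by
    by_contra! hneg
    set S := Icc 0 δ ∩ g ⁻¹' Iic 0
    have hbdd : BddBelow S := ⟨0, fun x hx => hx.1.1⟩
    -- up to the first zero `sInf S` of `g`, `w` is nondecreasing, so the bound gives `g > 0` there
    obtain ⟨ht₀, hgt₀⟩ : sInf S ∈ S :=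
      (hg.preimage_isClosed_of_isClosed isClosed_Icc isClosed_Iic).csInf_mem hneg hbdd
    have hbefore : ∀ s ∈ Ioo 0 (sInf S), 0 ≤ g s := fun s hs => by
      by_contra! hgs
      exact (csInf_le hbdd ⟨⟨hs.1.le, hs.2.le.trans ht₀.2⟩, hgs.le⟩).not_gt hs.2
    have := hwg _ ht₀ (nonneg_on_Icc_of_hasDerivAt_nonneg hw hw₀ hbefore)
    linarith [hℓ _ ht₀, show g (sInf S) ≤ 0 from hgt₀]
  exact fun t ht => hwg t ht <| nonneg_on_Icc_of_hasDerivAt_nonneg hw hw₀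
    fun s hs => (hpos s ⟨hs.1.le, hs.2.le.trans ht.2⟩).le

lemma integral_le_two_mul_of_le_deriv_while_nonneg {w g ℓ : ℝ → ℝ} {δ M : ℝ} (hδ : 0 ≤ δ)
    (hw : ∀ t, HasDerivAt w (g t) t) (hg : ContinuousOn g (Icc 0 δ)) (hwM : ∀ t, |w t| ≤ M)
    (hw₀ : 0 ≤ w 0) (hℓ : ∀ t ∈ Icc 0 δ, 0 < ℓ t) (hℓi : IntegrableOn ℓ (Icc 0 δ))
    (hwg : ∀ t ∈ Icc 0 δ, (∀ r ∈ Icc 0 t, 0 ≤ w r) → ℓ t ≤ g t) :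
    ∫ t in 0..δ, ℓ t ≤ 2 * M := by
  have hle := le_deriv_of_le_deriv_while_nonneg hw hg hw₀ hℓ hwg
  have hint : ∫ t in 0..δ, ℓ t ≤ w δ - w 0 :=
    intervalIntegral.integral_le_sub_of_hasDeriv_right_of_le hδ
      (fun t _ => (hw t).continuousAt.continuousWithinAt) (fun t _ => (hw t).hasDerivWithinAt)
      hℓi fun t ht => hle t (Ioo_subset_Icc_self ht)
  linarith [abs_le.mp (hwM δ), abs_le.mp (hwM 0)]

lemma neg_re_mul_sub_mul_le {c z E : ℂ} {v M : ℝ} (hc : ‖c‖ = 1) (hz : ‖z‖ ≤ M)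
    (hcz : 0 ≤ (c * z).re) : -(c * ((v - E) * z)).re ≤ M * (max (-v) 0 + ‖E‖) := by
  have hsplit : -(c * ((v - E) * z)).re = -v * (c * z).re + (E * (c * z)).re := by
    rw [show c * ((v - E) * z) = v * (c * z) - E * (c * z) by ring, Complex.sub_re,
      Complex.re_ofReal_mul]
    ring
  have hcz_le : (c * z).re ≤ M := (Complex.re_le_norm _).trans (by rwa [norm_mul, hc, one_mul])
  have hV : -v * (c * z).re ≤ max (-v) 0 * M :=
    (mul_le_mul_of_nonneg_right (le_max_left _ _) hcz).trans
      (mul_le_mul_of_nonneg_left hcz_le (le_max_right _ _))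
  have hE : (E * (c * z)).re ≤ ‖E‖ * M :=
    (Complex.re_le_norm _).trans (by
      rw [norm_mul, norm_mul, hc, one_mul]; exact mul_le_mul_of_nonneg_left hz (norm_nonneg E))
  linarith

structure IsSchrodingerSolution (V : ℝ → ℝ) (E : ℂ) (u u' : ℝ → ℂ) : Prop where
  hasDerivAt : ∀ x, HasDerivAt u (u' x) x
  deriv_sub : ∀ a b, a ≤ b → u' b - u' a = ∫ t in a..b, ((V t : ℂ) - E) * u t

namespace IsSchrodingerSolution

variable {V : ℝ → ℝ} {E : ℂ} {u u' : ℝ → ℂ}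

lemma comp_neg (h : IsSchrodingerSolution V E u u') :
    IsSchrodingerSolution (fun t => V (-t)) E (fun t => u (-t)) (fun t => -u' (-t)) where
  hasDerivAt x := by
    simpa [Function.comp_def] using (h.hasDerivAt (-x)).scomp x (hasDerivAt_neg x)
  deriv_sub a b hab := by
    rw [intervalIntegral.integral_comp_neg (fun t => ((V t : ℂ) - E) * u t),
      ← h.deriv_sub _ _ (neg_le_neg hab)]
    ring

lemma deriv_eq_add_integral (h : IsSchrodingerSolution V E u u') (x : ℝ) :
    u' x = u' 0 + ∫ t in 0..x, ((V t : ℂ) - E) * u t := by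
  rcases le_total 0 x with hx | hx
  · rw [← h.deriv_sub 0 x hx]; ring
  · rw [intervalIntegral.integral_symm, ← h.deriv_sub x 0 hx]; ring

lemma continuous (h : IsSchrodingerSolution V E u u') : Continuous u :=
  continuous_iff_continuousAt.mpr fun x => (h.hasDerivAt x).continuousAt

lemma intervalIntegrable_integrand (h : IsSchrodingerSolution V E u u')
    (hV : ∀ a b, IntervalIntegrable V volume a b) (a b : ℝ) :
    IntervalIntegrable (fun t => ((V t : ℂ) - E) * u t) volume a b := by
  have hVC : IntervalIntegrable (fun t => (V t : ℂ)) volume a b :=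
    ⟨(hV a b).1.ofReal, (hV a b).2.ofReal⟩
  exact (hVC.sub intervalIntegrable_const).mul_continuousOn h.continuous.continuousOn

lemma continuous_deriv (h : IsSchrodingerSolution V E u u')
    (hV : ∀ a b, IntervalIntegrable V volume a b) : Continuous u' := by
  rw [funext h.deriv_eq_add_integral]
  exact continuous_const.add
    (intervalIntegral.continuous_primitive (h.intervalIntegrable_integrand hV) 0)

lemma re_mul_deriv_sub_le (h : IsSchrodingerSolution V E u u')
    (hV : ∀ a b, IntervalIntegrable V volume a b) {M : ℝ} (hM : ∀ x, ‖u x‖ ≤ M)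
    {c : ℂ} (hc : ‖c‖ = 1) {a b : ℝ} (hab : a ≤ b) (hw : ∀ r ∈ Icc a b, 0 ≤ (c * u r).re) :
    (c * u' a).re - (c * u' b).re ≤ M * ((∫ y in a..b, max (-V y) 0) + ‖E‖ * (b - a)) := by
  have hi := (h.intervalIntegrable_integrand hV a b).const_mul c
  have hVneg := (hV a b).max_neg_zero
  have hre : ∫ r in a..b, (c * (((V r : ℂ) - E) * u r)).re
      = (∫ r in a..b, c * (((V r : ℂ) - E) * u r)).re :=
    intervalIntegral.intervalIntegral_re hi
  calc (c * u' a).re - (c * u' b).re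
      = ∫ r in a..b, -(c * (((V r : ℂ) - E) * u r)).re := by
        rw [intervalIntegral.integral_neg, hre,
          intervalIntegral.integral_const_mul, ← h.deriv_sub a b hab]
        simp only [mul_sub, Complex.sub_re]
        ring
    _ ≤ ∫ r in a..b, M * (max (-V r) 0 + ‖E‖) :=
        intervalIntegral.integral_mono_on hab ⟨hi.1.re.neg, hi.2.re.neg⟩
          ((hVneg.add intervalIntegrable_const).const_mul M)
          fun r hr => neg_re_mul_sub_mul_le hc (hM r) (hw r hr)
    _ = M * ((∫ y in a..b, max (-V y) 0) + ‖E‖ * (b - a)) := by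
        rw [intervalIntegral.integral_const_mul, intervalIntegral.integral_add hVneg
          intervalIntegrable_const, intervalIntegral.integral_const,
          smul_eq_mul, mul_comm ‖E‖]

lemma re_mul_deriv_sub_le_of_integral_unit_le (h : IsSchrodingerSolution V E u u')
    (hV : ∀ a b, IntervalIntegrable V volume a b) {C₁ M : ℝ}
    (hC₁ : ∀ x, ∫ y in x..x + 1, max (-V y) 0 ≤ C₁) (hM : ∀ x, ‖u x‖ ≤ M)
    {c : ℂ} (hc : ‖c‖ = 1) {x₀ t : ℝ} (ht : 0 ≤ t)
    (hw : ∀ r ∈ Icc x₀ (x₀ + t), 0 ≤ (c * u r).re) :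
    (c * u' x₀).re - (c * u' (x₀ + t)).re ≤ M * C₁ + M * (C₁ + ‖E‖) * t := by
  have hdrop := h.re_mul_deriv_sub_le hV hM hc (le_add_of_nonneg_right ht) hw
  have hVneg := integral_le_mul_add_one_of_integral_unit_le (fun a b => (hV a b).max_neg_zero)
    (fun _ => le_max_right _ _) hC₁ x₀ ht
  have hM₀ : 0 ≤ M := (norm_nonneg _).trans (hM 0)
  rw [add_sub_cancel_left] at hdrop
  calc _ ≤ _ := hdrop
    _ ≤ M * (C₁ * (t + 1) + ‖E‖ * t) := by gcongr
    _ = M * C₁ + M * (C₁ + ‖E‖) * t := by ring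

lemma re_mul_deriv_le (h : IsSchrodingerSolution V E u u')
    (hV : ∀ a b, IntervalIntegrable V volume a b) {C₁ M : ℝ}
    (hC₁ : ∀ x, ∫ y in x..x + 1, max (-V y) 0 ≤ C₁) (hE : 0 < C₁ + ‖E‖) (hM : ∀ x, ‖u x‖ ≤ M)
    {c : ℂ} (hc : ‖c‖ = 1) {x₀ : ℝ} (hx₀ : 0 ≤ (c * u x₀).re) :
    (c * u' x₀).re ≤ (C₁ + 2 * √(C₁ + ‖E‖)) * M := by
  set C₂ := C₁ + ‖E‖
  set q := (c * u' x₀).re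
  set s := √C₂
  have hs : 0 < s := Real.sqrt_pos.mpr hE
  have hs2 : s ^ 2 = C₂ := Real.sq_sqrt hE.le
  have hM₀ : 0 ≤ M := (norm_nonneg _).trans (hM 0)
  by_contra! hq
  set w : ℝ → ℝ := fun t => (c * u (x₀ + t)).re
  set g : ℝ → ℝ := fun t => (c * u' (x₀ + t)).re
  set ℓ : ℝ → ℝ := fun t => (q - M * C₁) - M * C₂ * t
  have hw : ∀ t, HasDerivAt w (g t) t := fun t =>
    Complex.reCLM.hasFDerivAt.comp_hasDerivAt t
      (((h.hasDerivAt (x₀ + t)).comp_const_add x₀ t).const_mul c)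
  have hg : Continuous g := by
    have := h.continuous_deriv hV
    fun_prop
  have hwM : ∀ t, |w t| ≤ M := fun t =>
    (Complex.abs_re_le_norm _).trans (by rw [norm_mul, hc, one_mul]; exact hM _)
  have hC₂δ : C₂ * (2 / s) = 2 * s := by rw [← hs2]; field_simp
  have hℓ : ∀ t ∈ Icc 0 (2 / s), 0 < ℓ t := fun t ht => by
    have := mul_le_mul_of_nonneg_left ht.2 hE.le
    simp only [ℓ]
    nlinarith
  have hwg : ∀ t ∈ Icc 0 (2 / s), (∀ r ∈ Icc 0 t, 0 ≤ w r) → ℓ t ≤ g t := fun t ht hwt => by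
    have := h.re_mul_deriv_sub_le_of_integral_unit_le hV hC₁ hM hc ht.1 fun r hr => by
      simpa [w] using hwt (r - x₀) ⟨by linarith [hr.1], by linarith [hr.2]⟩
    simp only [ℓ, g]
    linarith
  have hint := integral_le_two_mul_of_le_deriv_while_nonneg (by positivity) hw hg.continuousOn
    hwM (by simpa [w] using hx₀) hℓ (by fun_prop : Continuous ℓ).integrableOn_Icc hwg
  -- `δ = 2 / √C₂` minimises the resulting bound `2 M / δ + M C₂ δ / 2` on `q - M C₁`
  rw [integral_const_sub_mul_id, show M * C₂ * (2 / s) ^ 2 / 2 = 2 * M by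
    rw [← hs2]; field_simp] at hint
  have hdiv : (q - M * C₁) * 2 / s ≤ 4 * M := by rw [mul_div_assoc]; linarith
  rw [div_le_iff₀ hs] at hdiv
  linarith [show (C₁ + 2 * s) * M = M * C₁ + 2 * M * s by ring]

lemma norm_deriv_le (h : IsSchrodingerSolution V E u u')
    (hV : ∀ a b, IntervalIntegrable V volume a b) {C₁ M : ℝ}
    (hC₁ : ∀ x, ∫ y in x..x + 1, max (-V y) 0 ≤ C₁) (hE : 0 < C₁ + ‖E‖) (hM : ∀ x, ‖u x‖ ≤ M)
    (x₀ : ℝ) : ‖u' x₀‖ ≤ (C₁ + 2 * √(C₁ + ‖E‖)) * M := by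
  set c : ℂ := Complex.exp (↑(-(u' x₀).arg) * Complex.I)
  have hc : ‖c‖ = 1 := Complex.norm_exp_ofReal_mul_I _
  have hcu' : (c * u' x₀).re = ‖u' x₀‖ := by
    conv_lhs => rw [← Complex.norm_mul_exp_arg_mul_I (u' x₀)]
    rw [mul_left_comm, ← Complex.exp_add]
    push_cast
    simp
  rcases le_total 0 (c * u x₀).re with hpos | hneg
  · exact hcu' ▸ h.re_mul_deriv_le hV hC₁ hE hM hc hpos
  · have hV' : ∀ a b, IntervalIntegrable (fun t => V (-t)) volume a b := fun a b => by
      simpa using (IntervalIntegrable.iff_comp_neg).mp (hV (-a) (-b))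
    have hC₁' : ∀ x, ∫ y in x..x + 1, max (-V (-y)) 0 ≤ C₁ := fun x => by
      rw [intervalIntegral.integral_comp_neg (fun y => max (-V y) 0)]
      convert hC₁ (-(x + 1)) using 2
      ring
    have := h.comp_neg.re_mul_deriv_le hV' hC₁' hE (fun x => hM (-x)) (c := -c)
      (by rwa [norm_neg]) (x₀ := -x₀) (by simpa using hneg)
    simpa [hcu'] using this

end IsSchrodingerSolution

theorem stmt_7_general
    (V : ℝ → ℝ)
    (hVloc : LocallyIntegrable V volume)
    (C₁ : ℝ)
    (hC₁ : IsLUB (Set.range fun x : ℝ => ∫ y in x..x + 1, max (-V y) 0) C₁)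
    (E : ℂ) (u u' : ℝ → ℂ)
    (hu : ∀ x : ℝ, HasDerivAt u (u' x) x)
    (heq : ∀ a b : ℝ, a ≤ b →
      u' b - u' a = ∫ t in a..b, ((V t : ℂ) - E) * u t)
    (C₂ : ℝ) (hC₂ : C₂ = C₁ + ‖E‖) (hC₂pos : 0 < C₂)
    (hbdd : BddAbove (Set.range fun x => ‖u x‖)) :
    BddAbove (Set.range fun x => ‖u' x‖) ∧
      (⨆ x : ℝ, ‖u' x‖)
        ≤ (C₂ + 2 * Real.sqrt C₂) * ⨆ x : ℝ, ‖u x‖ := by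
  subst hC₂
  have hV : ∀ a b, IntervalIntegrable V volume a b := fun a b =>
    (hVloc.integrableOn_isCompact isCompact_uIcc).intervalIntegrable
  have hM : ∀ x, ‖u x‖ ≤ ⨆ x, ‖u x‖ := le_ciSup hbdd
  have hbound : ∀ x, ‖u' x‖ ≤ (C₁ + ‖E‖ + 2 * √(C₁ + ‖E‖)) * ⨆ x, ‖u x‖ := fun x => by
    refine (IsSchrodingerSolution.norm_deriv_le ⟨hu, heq⟩ hV (fun x => hC₁.1 ⟨x, rfl⟩) hC₂pos
      hM x).trans ?_
    have hM₀ : 0 ≤ ⨆ x, ‖u x‖ := (norm_nonneg _).trans (hM 0)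
    gcongr
    exact le_add_of_nonneg_right (norm_nonneg E)
  exact ⟨⟨_, forall_mem_range.mpr hbound⟩, ciSup_le hbound⟩

/-- If `u` is bounded on `ℝ`, then so is `u'`, and
`sup_x |u'(x)| ≤ (C₂ + 2√C₂) · sup_x |u(x)|`. -/
theorem stmt_7
    (V : ℝ → ℝ) (hVmeas : Measurable V)
    (hVloc : LocallyIntegrable V volume)
    (C₁ : ℝ)
    (hC₁ : IsLUB (Set.range fun x : ℝ => ∫ y in x..x + 1, max (-V y) 0) C₁)
    (E : ℂ) (u u' : ℝ → ℂ)
    (hu : ∀ x : ℝ, HasDerivAt u (u' x) x)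
    (heq : ∀ a b : ℝ, a ≤ b →
      u' b - u' a = ∫ t in a..b, ((V t : ℂ) - E) * u t)
    (C₂ : ℝ) (hC₂ : C₂ = C₁ + ‖E‖) (hC₂pos : 0 < C₂)
    (hbdd : BddAbove (Set.range fun x => ‖u x‖)) :
    BddAbove (Set.range fun x => ‖u' x‖) ∧
      (⨆ x : ℝ, ‖u' x‖)
        ≤ (C₂ + 2 * Real.sqrt C₂) * ⨆ x : ℝ, ‖u x‖ :=
  stmt_7_general V hVloc C₁ hC₁ E u u' hu heq C₂ hC₂ hC₂pos hbdd
end
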